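/- Fix p ∈ [0,1] and ε > 0. Let θ = |1 − f(p) − g(p)|, q = max{p, 1−p}, and δ = min_{v∈V} deg v. Sample x(0) ∈ {0,1}^V from the product measure with independent Bernoulli(p) coordinates and let x(t+1) = Γ(x(t)) be the deterministic process. Then with probability at least 1 − 2|V| e^{−2δε²} over the choice of x(0), for every t ≥ 1 one has max_{v∈V} |x_v(t) − γ̃^t(p)| ≤ (qθ + Mε) e^{2M(t−1)}, where γ̃(s) = s(1−f(s)) + (1−s)g(s) and γ̃^t denotes the t-fold iterate of γ̃. -/

import Mathlib

open MeasureTheory Finset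

noncomputable section

/-- Real value of a Boolean state. -/
def b2r (b : Bool) : ℝ := if b then 1 else 0

/-- Neighborhood average `y_{N_v} = (deg v)⁻¹ ∑_{w ∈ N_v} y_w`. -/
def nbrAvg {V : Type} [Fintype V] (G : SimpleGraph V) [DecidableRel G.Adj]
    (y : V → ℝ) (v : V) : ℝ :=
  (∑ w ∈ G.neighborFinset v, y w) / (G.degree v : ℝ)

/-- `γ(a,b) = a(1 - f(b)) + (1 - a) g(b)`. -/
def gam (f g : ℝ → ℝ) (a b : ℝ) : ℝ := a * (1 - f b) + (1 - a) * g b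

/-- The deterministic process `x(t+1)_v = γ(x(t)_v, x(t)_{N_v})`. -/
def det {V : Type} [Fintype V] (G : SimpleGraph V) [DecidableRel G.Adj]
    (f g : ℝ → ℝ) (x0 : V → ℝ) : ℕ → V → ℝ
  | 0 => x0
  | t + 1 => fun v => gam f g (det G f g x0 t v) (nbrAvg G (det G f g x0 t) v)

/-- Product measure on `V → Bool` with independent Bernoulli(`p`) coordinates,
written out by its mass function. -/
def bernoulliProduct {V : Type} [Fintype V] [DecidableEq V] (p : ℝ) :
    Measure (V → Bool) :=
  ∑ y : V → Bool, ENNReal.ofReal (∏ v, if y v then p else 1 - p) • Measure.dirac y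

/-!
Each neighbourhood average of the initial state is the mean of `deg v` independent Bernoulli(`p`)
variables, so by Hoeffding's inequality it lies within `ε` of `p` except with probability
`2 e^{-2 deg v ε²}`; a union bound over the vertices gives the claimed probability. On that event
the process is compared with the mean-field orbit `m_t = γ̃^t(p)`: `γ` is affine in its first
argument with slope `1 - f - g ∈ [-1, 1]` and `M`-Lipschitz in its second, and a neighbourhood
average is no farther from a constant than the values it averages. Hence the error is at most
`qθ + Mε` after one step and grows by a factor at most `1 + M ≤ e^{2M}` per further step.
-/

open ProbabilityTheory Real
open scoped NNReal

lemma b2r_mem_Icc (b : Bool) : b2r b ∈ Set.Icc (0 : ℝ) 1 := by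
  cases b <;> simp [b2r]

lemma ProbabilityTheory.HasSubgaussianMGF.measure_abs_ge_le {Ω : Type*} [MeasurableSpace Ω]
    {μ : Measure Ω} {X : Ω → ℝ} {c : ℝ≥0} (h : HasSubgaussianMGF X c μ) {ε : ℝ} (hε : 0 ≤ ε) :
    μ.real {ω | ε ≤ |X ω|} ≤ 2 * exp (-ε ^ 2 / (2 * c)) := by
  have hsplit : {ω | ε ≤ |X ω|} = {ω | ε ≤ X ω} ∪ {ω | ε ≤ (-X) ω} := by
    ext ω; simp [le_abs]
  rw [hsplit, two_mul]
  exact (measureReal_union_le _ _).trans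
    (add_le_add (h.measure_ge_le hε) (h.neg.measure_ge_le hε))

lemma one_sub_card_mul_le_measureReal_iInter_compl {Ω ι : Type*} [MeasurableSpace Ω]
    {μ : Measure Ω} [IsProbabilityMeasure μ] [Fintype ι] {B : ι → Set Ω} {r : ℝ}
    (hB : ∀ i, μ.real (B i) ≤ r) :
    1 - Fintype.card ι * r ≤ μ.real (⋂ i, (B i)ᶜ) := by
  have hunion : μ.real (⋃ i, B i) ≤ Fintype.card ι * r := calc
    _ ≤ ∑ i, μ.real (B i) := measureReal_iUnion_fintype_le B
    _ ≤ ∑ _i : ι, r := Finset.sum_le_sum fun i _ => hB i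
    _ = Fintype.card ι * r := by simp
  have hcover := measureReal_union_le (μ := μ) (⋃ i, B i) (⋃ i, B i)ᶜ
  rw [Set.union_compl_self, probReal_univ] at hcover
  rw [← Set.compl_iUnion]
  linarith

lemma hasSubgaussianMGF_bernoulliMeasure (p : unitInterval) :
    HasSubgaussianMGF (fun b => b2r b - p) (1 / 4) Ber(true, false, p) := by
  have h := hasSubgaussianMGF_of_mem_Icc (μ := Ber(true, false, p)) (X := b2r) (a := 0) (b := 1)
    (by fun_prop) (ae_of_all _ b2r_mem_Icc)
  rw [integral_bernoulliMeasure] at h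
  convert h using 2
  · simp [b2r]
  · norm_num

lemma measureReal_lt_abs_average_sub_le {ι : Type*} [Fintype ι] (p : unitInterval)
    {s : Finset ι} (hs : 0 < #s) {ε : ℝ} (hε : 0 ≤ ε) :
    (Measure.pi fun _ : ι => Ber(true, false, p)).real
        {y | ε < |(∑ i ∈ s, b2r (y i)) / #s - p|}
      ≤ 2 * exp (-2 * #s * ε ^ 2) := by
  set μ := Measure.pi fun _ : ι => Ber(true, false, p)
  have hn : (0 : ℝ) < #s := by exact_mod_cast hs
  have hindep : iIndepFun (fun i (y : ι → Bool) => b2r (y i) - p) μ :=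
    iIndepFun_pi (X := fun _ b => b2r b - p) fun _ => by fun_prop
  have hsubG : ∀ i ∈ s, HasSubgaussianMGF (fun y : ι → Bool => b2r (y i) - p) (1 / 4) μ := by
    intro i _
    refine HasSubgaussianMGF.of_map (X := fun b => b2r b - p) (Y := Function.eval i)
      (measurable_pi_apply (X := fun _ : ι => Bool) i).aemeasurable ?_
    rw [(measurePreserving_eval _ i).map_eq]
    exact hasSubgaussianMGF_bernoulliMeasure p
  have hsum := (HasSubgaussianMGF.sum_of_iIndepFun hindep hsubG).measure_abs_ge_le
    (ε := #s * ε) (by positivity)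
  have hcenter : ∀ y : ι → Bool,
      (∑ i ∈ s, b2r (y i)) / #s - p = (∑ i ∈ s, (b2r (y i) - p)) / #s := by
    intro y
    rw [Finset.sum_sub_distrib, Finset.sum_const, nsmul_eq_mul]
    field_simp
  calc μ.real {y | ε < |(∑ i ∈ s, b2r (y i)) / #s - p|}
      ≤ μ.real {y | #s * ε ≤ |∑ i ∈ s, (b2r (y i) - p)|} := by
        refine measureReal_mono fun y hy => ?_
        rw [Set.mem_ofPred_eq, hcenter, abs_div, abs_of_pos hn, lt_div_iff₀ hn] at hy
        rw [Set.mem_ofPred_eq, mul_comm]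
        exact hy.le
    _ ≤ _ := hsum
    _ = _ := by
      simp only [Finset.sum_const, nsmul_eq_mul]
      push_cast
      congr 2
      field_simp
      ring

lemma bernoulliProduct_eq_pi {V : Type} [Fintype V] [DecidableEq V] (p : ℝ)
    (hp : p ∈ Set.Icc (0 : ℝ) 1) :
    bernoulliProduct (V := V) p = Measure.pi fun _ => Ber(true, false, ⟨p, hp⟩) := by
  refine Measure.ext_of_singleton fun y => ?_
  rw [← Set.univ_pi_singleton, Measure.pi_pi, Set.univ_pi_singleton, bernoulliProduct,
    Measure.finsetSum_apply]
  simp only [Measure.smul_apply, smul_eq_mul, Measure.dirac_apply, Set.indicator_apply,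
    Set.mem_singleton_iff, Pi.one_apply, mul_ite, mul_one, mul_zero, Finset.sum_ite_eq',
    Finset.mem_univ, if_true]
  rw [ENNReal.ofReal_prod_of_nonneg fun v _ => by cases y v <;> simp [hp.1, hp.2]]
  refine Finset.prod_congr rfl fun v _ => ?_
  cases y v <;> simp <;> exact ENNReal.ofReal_eq_coe_nnreal _

section MeanField

variable {V : Type} [Fintype V] {G : SimpleGraph V} [DecidableRel G.Adj] {f g : ℝ → ℝ} {M : ℝ}

lemma nbrAvg_mem_Icc {v : V} (hv : 0 < G.degree v) {x : V → ℝ} {a b : ℝ}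
    (hx : ∀ w, x w ∈ Set.Icc a b) : nbrAvg G x v ∈ Set.Icc a b := by
  have hdeg : (0 : ℝ) < G.degree v := by exact_mod_cast hv
  have hlow := Finset.card_nsmul_le_sum (G.neighborFinset v) x a fun w _ => (hx w).1
  have hup := Finset.sum_le_card_nsmul (G.neighborFinset v) x b fun w _ => (hx w).2
  rw [SimpleGraph.card_neighborFinset_eq_degree, nsmul_eq_mul] at hlow hup
  rw [nbrAvg, Set.mem_Icc, le_div_iff₀ hdeg, div_le_iff₀ hdeg]
  constructor <;> linarith

lemma gam_mem_Icc (hf : Set.MapsTo f (Set.Icc 0 1) (Set.Icc 0 1))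
    (hg : Set.MapsTo g (Set.Icc 0 1) (Set.Icc 0 1)) {a b : ℝ} (ha : a ∈ Set.Icc (0 : ℝ) 1)
    (hb : b ∈ Set.Icc (0 : ℝ) 1) : gam f g a b ∈ Set.Icc (0 : ℝ) 1 := by
  obtain ⟨hf0, hf1⟩ := hf hb
  obtain ⟨hg0, hg1⟩ := hg hb
  obtain ⟨ha0, ha1⟩ := ha
  constructor <;> rw [gam] <;> nlinarith

lemma det_mem_Icc (hdeg : ∀ v, 0 < G.degree v) (hf : Set.MapsTo f (Set.Icc 0 1) (Set.Icc 0 1))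
    (hg : Set.MapsTo g (Set.Icc 0 1) (Set.Icc 0 1)) {x₀ : V → ℝ}
    (hx₀ : ∀ v, x₀ v ∈ Set.Icc (0 : ℝ) 1) (t : ℕ) (v : V) :
    det G f g x₀ t v ∈ Set.Icc (0 : ℝ) 1 := by
  induction t generalizing v with
  | zero => exact hx₀ v
  | succ t ih => exact gam_mem_Icc hf hg (ih v) (nbrAvg_mem_Icc (hdeg v) ih)

lemma nonneg_of_forall_abs_sub_le_mul
    (hfLip : ∀ a ∈ Set.Icc (0:ℝ) 1, ∀ b ∈ Set.Icc (0:ℝ) 1, |f a - f b| ≤ M * |a - b|) :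
    0 ≤ M := by
  have h := hfLip 0 (by norm_num) 1 (by norm_num)
  norm_num at h
  exact (abs_nonneg _).trans h

lemma abs_gam_sub_gam_le
    (hfLip : ∀ a ∈ Set.Icc (0:ℝ) 1, ∀ b ∈ Set.Icc (0:ℝ) 1, |f a - f b| ≤ M * |a - b|)
    (hgLip : ∀ a ∈ Set.Icc (0:ℝ) 1, ∀ b ∈ Set.Icc (0:ℝ) 1, |g a - g b| ≤ M * |a - b|)
    {a b m : ℝ} (ha : a ∈ Set.Icc (0 : ℝ) 1) (hb : b ∈ Set.Icc (0 : ℝ) 1)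
    (hm : m ∈ Set.Icc (0 : ℝ) 1) :
    |gam f g a b - gam f g m m| ≤ |a - m| * |1 - f m - g m| + M * |b - m| := by
  have hsplit : gam f g a b - gam f g m m
      = (a * (f m - f b) + (1 - a) * (g b - g m)) + (a - m) * (1 - f m - g m) := by
    simp only [gam]; ring
  have hf := hfLip b hb m hm
  have hg := hgLip b hb m hm
  rw [abs_sub_comm] at hf
  have hconv : |a * (f m - f b) + (1 - a) * (g b - g m)| ≤ M * |b - m| := calc
    _ ≤ a * |f m - f b| + (1 - a) * |g b - g m| := by
      refine (abs_add_le _ _).trans_eq ?_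
      rw [abs_mul, abs_mul, abs_of_nonneg ha.1, abs_of_nonneg (sub_nonneg.2 ha.2)]
    _ ≤ a * (M * |b - m|) + (1 - a) * (M * |b - m|) := by
      gcongr
      · exact ha.1
      · exact sub_nonneg.2 ha.2
    _ = M * |b - m| := by ring
  rw [hsplit]
  refine (abs_add_le _ _).trans ?_
  rw [abs_mul]
  linarith

theorem abs_det_sub_iterate_le (hdeg : ∀ v, 0 < G.degree v)
    (hf : Set.MapsTo f (Set.Icc 0 1) (Set.Icc 0 1)) (hg : Set.MapsTo g (Set.Icc 0 1) (Set.Icc 0 1))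
    (hfLip : ∀ a ∈ Set.Icc (0:ℝ) 1, ∀ b ∈ Set.Icc (0:ℝ) 1, |f a - f b| ≤ M * |a - b|)
    (hgLip : ∀ a ∈ Set.Icc (0:ℝ) 1, ∀ b ∈ Set.Icc (0:ℝ) 1, |g a - g b| ≤ M * |a - b|)
    {p ε : ℝ} (hp : p ∈ Set.Icc (0 : ℝ) 1) {x₀ : V → ℝ} (hx₀ : ∀ v, x₀ v ∈ Set.Icc (0 : ℝ) 1)
    (hclose : ∀ v, |nbrAvg G x₀ v - p| ≤ ε) (n : ℕ) (v : V) :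
    |det G f g x₀ (n + 1) v - (fun s => gam f g s s)^[n + 1] p|
      ≤ (max p (1 - p) * |1 - f p - g p| + M * ε) * (1 + M) ^ n := by
  have hM := nonneg_of_forall_abs_sub_le_mul hfLip
  induction n generalizing v with
  | zero =>
    have hx₀p : |x₀ v - p| ≤ max p (1 - p) := by
      rw [abs_le]
      constructor <;> linarith [le_max_left p (1 - p), le_max_right p (1 - p), (hx₀ v).1, (hx₀ v).2]
    calc |gam f g (x₀ v) (nbrAvg G x₀ v) - gam f g p p|
        ≤ |x₀ v - p| * |1 - f p - g p| + M * |nbrAvg G x₀ v - p| :=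
          abs_gam_sub_gam_le hfLip hgLip (hx₀ v) (nbrAvg_mem_Icc (hdeg v) hx₀) hp
      _ ≤ max p (1 - p) * |1 - f p - g p| + M * ε := by gcongr; exact hclose v
      _ = _ := by ring
  | succ n ih =>
    set x := det G f g x₀ (n + 1)
    set m := (fun s => gam f g s s)^[n + 1] p
    set D := (max p (1 - p) * |1 - f p - g p| + M * ε) * (1 + M) ^ n
    have hm : m ∈ Set.Icc (0 : ℝ) 1 :=
      Set.MapsTo.iterate (fun s hs => gam_mem_Icc hf hg hs hs) (n + 1) hp
    have hx : ∀ w, x w ∈ Set.Icc (0 : ℝ) 1 := det_mem_Icc hdeg hf hg hx₀ (n + 1)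
    have havg : |nbrAvg G x v - m| ≤ D := by
      have := nbrAvg_mem_Icc (hdeg v) (x := x) (a := m - D) (b := m + D) fun w => by
        have := abs_sub_le_iff.1 (ih w); constructor <;> linarith
      rw [abs_sub_le_iff]; constructor <;> linarith [this.1, this.2]
    have hslope : |1 - f m - g m| ≤ 1 := by
      rw [abs_le]; constructor <;> linarith [(hf hm).1, (hf hm).2, (hg hm).1, (hg hm).2]
    rw [Function.iterate_succ_apply']
    calc |gam f g (x v) (nbrAvg G x v) - gam f g m m|
        ≤ |x v - m| * |1 - f m - g m| + M * |nbrAvg G x v - m| :=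
          abs_gam_sub_gam_le hfLip hgLip (hx v) (nbrAvg_mem_Icc (hdeg v) hx) hm
      _ ≤ D * 1 + M * D := by
        have hD : 0 ≤ D := (abs_nonneg _).trans (ih v)
        gcongr
        exact ih v
      _ = _ := by ring

theorem abs_det_sub_iterate_le_exp (hdeg : ∀ v, 0 < G.degree v)
    (hf : Set.MapsTo f (Set.Icc 0 1) (Set.Icc 0 1)) (hg : Set.MapsTo g (Set.Icc 0 1) (Set.Icc 0 1))
    (hfLip : ∀ a ∈ Set.Icc (0:ℝ) 1, ∀ b ∈ Set.Icc (0:ℝ) 1, |f a - f b| ≤ M * |a - b|)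
    (hgLip : ∀ a ∈ Set.Icc (0:ℝ) 1, ∀ b ∈ Set.Icc (0:ℝ) 1, |g a - g b| ≤ M * |a - b|)
    {p ε : ℝ} (hp : p ∈ Set.Icc (0 : ℝ) 1) (hε : 0 ≤ ε) {x₀ : V → ℝ}
    (hx₀ : ∀ v, x₀ v ∈ Set.Icc (0 : ℝ) 1) (hclose : ∀ v, |nbrAvg G x₀ v - p| ≤ ε) {t : ℕ}
    (ht : 1 ≤ t) (v : V) :
    |det G f g x₀ t v - (fun s => gam f g s s)^[t] p|
      ≤ (max p (1 - p) * |1 - f p - g p| + M * ε) * exp (2 * M * ((t : ℝ) - 1)) := by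
  have hM := nonneg_of_forall_abs_sub_le_mul hfLip
  obtain ⟨n, rfl⟩ := Nat.exists_eq_add_of_le' ht
  have hgrowth : (1 + M) ^ n ≤ exp (2 * M * (((n + 1 : ℕ) : ℝ) - 1)) := calc
    (1 + M) ^ n ≤ exp M ^ n := by gcongr; linarith [add_one_le_exp M]
    _ ≤ _ := by
      rw [← exp_nat_mul, exp_le_exp]
      push_cast
      nlinarith [n.cast_nonneg (α := ℝ)]
  refine (abs_det_sub_iterate_le hdeg hf hg hfLip hgLip hp hx₀ hclose n v).trans ?_
  exact mul_le_mul_of_nonneg_left hgrowth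
    (add_nonneg (mul_nonneg (le_max_of_le_left hp.1) (abs_nonneg _)) (mul_nonneg hM hε))

end MeanField

/-- **Proposition (Diagonal Concentration — quantitative)**. -/
theorem diagonal_concentration_quantitative
    {V : Type} [Fintype V] [DecidableEq V] [Nonempty V]
    (G : SimpleGraph V) [DecidableRel G.Adj]
    (hdeg : ∀ v : V, 0 < G.degree v)
    (f g : ℝ → ℝ) (M : ℝ)
    (hf01 : ∀ a ∈ Set.Icc (0:ℝ) 1, f a ∈ Set.Icc (0:ℝ) 1)
    (hg01 : ∀ a ∈ Set.Icc (0:ℝ) 1, g a ∈ Set.Icc (0:ℝ) 1)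
    (hfLip : ∀ a ∈ Set.Icc (0:ℝ) 1, ∀ b ∈ Set.Icc (0:ℝ) 1, |f a - f b| ≤ M * |a - b|)
    (hgLip : ∀ a ∈ Set.Icc (0:ℝ) 1, ∀ b ∈ Set.Icc (0:ℝ) 1, |g a - g b| ≤ M * |a - b|)
    (p : ℝ) (hp : p ∈ Set.Icc (0:ℝ) 1) (eps : ℝ) (heps : 0 < eps) :
    ENNReal.ofReal (1 - 2 * (Fintype.card V : ℝ) *
        Real.exp (-2 * (Finset.univ.inf' Finset.univ_nonempty fun v : V => G.degree v : ℕ)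
          * eps ^ 2))
      ≤ bernoulliProduct (V := V) p
          {x0 | ∀ t : ℕ, 1 ≤ t → ∀ v : V,
            |det G f g (fun w => b2r (x0 w)) t v
              - (fun s => s * (1 - f s) + (1 - s) * g s)^[t] p|
              ≤ (max p (1 - p) * |1 - f p - g p| + M * eps)
                  * Real.exp (2 * M * ((t : ℝ) - 1))} := by
  set δ : ℕ := Finset.univ.inf' Finset.univ_nonempty fun v : V => G.degree v
  set μ := Measure.pi fun _ : V => Ber(true, false, ⟨p, hp⟩)
  set far := fun v : V => {y : V → Bool | eps < |nbrAvg G (fun w => b2r (y w)) v - p|}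
  have hfar : ∀ v, μ.real (far v) ≤ 2 * Real.exp (-2 * δ * eps ^ 2) := fun v =>
    (measureReal_lt_abs_average_sub_le ⟨p, hp⟩ (hdeg v) heps.le).trans <| by
      have hδ : (δ : ℝ) ≤ G.degree v := by exact_mod_cast Finset.inf'_le _ (Finset.mem_univ v)
      rw [SimpleGraph.card_neighborFinset_eq_degree]
      gcongr 2 * Real.exp ?_
      nlinarith [sq_nonneg eps]
  rw [bernoulliProduct_eq_pi p hp]
  refine ENNReal.ofReal_le_of_le_toReal ?_
  refine le_trans ?_ (measureReal_mono (μ := μ) (s₁ := ⋂ v, (far v)ᶜ) ?_)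
  · calc 1 - 2 * (Fintype.card V : ℝ) * Real.exp (-2 * δ * eps ^ 2)
        = 1 - Fintype.card V * (2 * Real.exp (-2 * δ * eps ^ 2)) := by ring
      _ ≤ μ.real (⋂ v, (far v)ᶜ) := one_sub_card_mul_le_measureReal_iInter_compl hfar
  · intro y hy t ht v
    simp only [far, Set.mem_iInter, Set.mem_compl_iff, Set.mem_ofPred_eq, not_lt] at hy
    exact abs_det_sub_iterate_le_exp hdeg hf01 hg01 hfLip hgLip hp heps.le
      (fun w => b2r_mem_Icc _) hy ht v

end
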